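/- arXiv:2410.16604 — 2 statements merged into one kernel-verified Lean document; each statement's English description precedes it below -/
import Mathlib

section
/- Let p > 2 be a real number and let G be a connected simple graph with m edges and n vertices. Then E_p(G) ≤ 2m·(2m − n + 1)^{(p−2)/2}. -/
open Finset MeasureTheory

/-- The eigenvalues of the (real) adjacency matrix of a simple graph on `Fin n`. -/
noncomputable def adjEigenvalues {n : ℕ} (G : SimpleGraph (Fin n)) [DecidableRel G.Adj] :
    Fin n → ℝ :=
  Matrix.IsHermitian.eigenvalues
    ((Matrix.conjTranspose_eq_transpose_of_trivial (G.adjMatrix ℝ)).trans G.isSymm_adjMatrix)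

/-- The `p`-energy of a graph: the sum of the `p`-th powers of the absolute values of the
adjacency eigenvalues. -/
noncomputable def pEnergy {n : ℕ} (G : SimpleGraph (Fin n)) [DecidableRel G.Adj] (p : ℝ) : ℝ :=
  ∑ i, |adjEigenvalues G i| ^ p

/-- The star graph on `Fin n`: vertex `0` is adjacent to all other vertices. -/
def starGraph (n : ℕ) : SimpleGraph (Fin n) where
  Adj u v := ((u : ℕ) = 0 ∨ (v : ℕ) = 0) ∧ u ≠ v
  symm := ⟨fun _ _ h => ⟨h.1.symm, h.2.symm⟩⟩
  loopless := ⟨fun _ h => h.2 rfl⟩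

instance (n : ℕ) : DecidableRel (starGraph n).Adj :=
  fun u v => inferInstanceAs (Decidable (((u : ℕ) = 0 ∨ (v : ℕ) = 0) ∧ u ≠ v))

/-!
Every eigenvalue `λ` of the adjacency matrix `A` gives the eigenvalue `λ²` of `A²`, a nonnegative
matrix whose `k`-th row sum is `∑_{u ~ k} deg u`; by Gershgorin, `λ²` is at most some such row sum.
In a connected graph every vertex other than `k` and its neighbours has degree at least one, so
`∑_{u ~ k} deg u ≤ 2m - deg k - (n - 1 - deg k) = 2m - n + 1`. Hence
`|λ|^p = λ² |λ|^(p-2) ≤ λ² (2m - n + 1)^((p-2)/2)`, and summing with `∑ λ² = tr A² = 2m` gives the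
bound.
-/

open Matrix Unitary

namespace Matrix

variable {n : Type*} [Fintype n] [DecidableEq n]

theorem exists_norm_le_sum_norm_of_hasEigenvalue {K : Type*} [NormedField K] {A : Matrix n n K}
    {μ : K} (hμ : Module.End.HasEigenvalue (toLin' A) μ) : ∃ k, ‖μ‖ ≤ ∑ j, ‖A k j‖ := by
  obtain ⟨k, hk⟩ := eigenvalue_mem_ball hμ
  refine ⟨k, ?_⟩
  rw [mem_closedBall_iff_norm] at hk
  calc ‖μ‖ ≤ ‖A k k‖ + ‖μ - A k k‖ := norm_le_norm_add_norm_sub' _ _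
  _ ≤ ‖A k k‖ + ∑ j ∈ univ.erase k, ‖A k j‖ := by gcongr
  _ = ∑ j, ‖A k j‖ := add_sum_erase _ (fun j => ‖A k j‖) (mem_univ k)

namespace IsHermitian

variable {𝕜 : Type*} [RCLike 𝕜] {A : Matrix n n 𝕜}

theorem hasEigenvalue_eigenvalues (hA : A.IsHermitian) (i : n) :
    Module.End.HasEigenvalue (toLin' A) (hA.eigenvalues i : 𝕜) := by
  rw [Module.End.hasEigenvalue_iff_mem_spectrum, spectrum_toLin']
  exact spectrum.algebraMap_mem 𝕜 (hA.eigenvalues_mem_spectrum_real i)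

theorem sum_eigenvalues_sq (hA : A.IsHermitian) : ∑ i, (hA.eigenvalues i : 𝕜) ^ 2 = (A * A).trace := by
  conv_rhs => rw [hA.spectral_theorem, ← map_mul, conjStarAlgAut_apply, trace_mul_cycle,
    coe_star_mul_self, one_mul, diagonal_mul_diagonal, trace_diagonal]
  simp [sq]

end IsHermitian

end Matrix

namespace SimpleGraph

variable {V : Type*} [Fintype V] (G : SimpleGraph V) [DecidableRel G.Adj]

theorem sum_adjMatrix_mul_self_apply {R : Type*} [NonAssocSemiring R] (k : V) :
    ∑ j, (G.adjMatrix R * G.adjMatrix R) k j = ∑ u ∈ G.neighborFinset k, (G.degree u : R) := by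
  simp_rw [adjMatrix_mul_apply]
  rw [sum_comm]
  simp [neighborFinset_eq_filter, degree]

theorem trace_adjMatrix_mul_self {R : Type*} [NonAssocSemiring R] :
    (G.adjMatrix R * G.adjMatrix R).trace = 2 * #G.edgeFinset := by
  simp only [trace, diag_apply, adjMatrix_mul_self_apply_self]
  rw [← Nat.cast_sum, sum_degrees_eq_twice_card_edges, Nat.cast_mul, Nat.cast_ofNat]

variable {G} [DecidableEq V]

theorem Connected.sum_degree_neighborFinset_add_card_le (hG : G.Connected) (k : V) :
    ∑ u ∈ G.neighborFinset k, G.degree u + Fintype.card V ≤ 2 * #G.edgeFinset + 1 := by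
  set N := G.neighborFinset k
  have hN : N ⊆ univ.erase k := fun u hu =>
    mem_erase.mpr ⟨(G.ne_of_adj ((G.mem_neighborFinset k u).mp hu)).symm, mem_univ u⟩
  have hrest : #(univ.erase k \ N) ≤ ∑ u ∈ univ.erase k \ N, G.degree u := by
    simpa using card_nsmul_le_sum _ (fun u => G.degree u) 1 fun u hu =>
      (hG.preconnected u k).degree_pos_left (ne_of_mem_erase (sdiff_subset hu))
  have hcard : #(univ.erase k \ N) = Fintype.card V - 1 - G.degree k := by
    rw [card_sdiff_of_subset hN, card_erase_of_mem (mem_univ k), card_univ,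
      card_neighborFinset_eq_degree]
  have htot : ∑ u ∈ univ.erase k, G.degree u + G.degree k = 2 * #G.edgeFinset := by
    rw [sum_erase_add _ _ (mem_univ k), sum_degrees_eq_twice_card_edges]
  have hsplit := sum_sdiff hN (f := fun u => G.degree u)
  have hdeg := G.degree_lt_card_verts k
  omega

theorem Connected.sq_le_of_hasEigenvalue (hG : G.Connected) {μ : ℝ}
    (hμ : Module.End.HasEigenvalue (toLin' (G.adjMatrix ℝ)) μ) :
    μ ^ 2 ≤ 2 * #G.edgeFinset - Fintype.card V + 1 := by
  have hμ2 : Module.End.HasEigenvalue (toLin' (G.adjMatrix ℝ * G.adjMatrix ℝ)) (μ ^ 2) := by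
    simpa [toLin'_mul, sq, Module.End.mul_eq_comp] using hμ.pow 2
  obtain ⟨k, hk⟩ := exists_norm_le_sum_norm_of_hasEigenvalue hμ2
  have hentry : ∀ j, 0 ≤ (G.adjMatrix ℝ * G.adjMatrix ℝ) k j := fun j => by
    rw [adjMatrix_mul_apply]
    exact sum_nonneg fun u _ => by rw [adjMatrix_apply]; split_ifs <;> norm_num
  have hbound : ∑ u ∈ G.neighborFinset k, (G.degree u : ℝ) + Fintype.card V ≤
      2 * #G.edgeFinset + 1 := by exact_mod_cast hG.sum_degree_neighborFinset_add_card_le k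
  calc μ ^ 2 ≤ ‖μ ^ 2‖ := Real.le_norm_self _
  _ ≤ ∑ j, (G.adjMatrix ℝ * G.adjMatrix ℝ) k j := by
    simpa only [Real.norm_of_nonneg (hentry _)] using hk
  _ = ∑ u ∈ G.neighborFinset k, (G.degree u : ℝ) := G.sum_adjMatrix_mul_self_apply k
  _ ≤ 2 * #G.edgeFinset - Fintype.card V + 1 := by linarith

end SimpleGraph

theorem abs_rpow_le_sq_mul_rpow {x C p : ℝ} (hp : 2 ≤ p) (hx : x ^ 2 ≤ C) :
    |x| ^ p ≤ x ^ 2 * C ^ ((p - 2) / 2) := by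
  have hsq : x ^ 2 = |x| ^ (2 : ℝ) := by rw [Real.rpow_two, sq_abs]
  calc |x| ^ p = x ^ 2 * (x ^ 2) ^ ((p - 2) / 2) := by
        rw [hsq, ← Real.rpow_mul (abs_nonneg x), ← Real.rpow_add' (abs_nonneg x) (by linarith)]
        ring_nf
  _ ≤ x ^ 2 * C ^ ((p - 2) / 2) := by gcongr

/-- For `p > 2` and a connected graph with `m` edges and `n` vertices,
`E_p(G) ≤ 2m (2m - n + 1)^((p-2)/2)`. -/
theorem pEnergy_le_of_two_lt {n m : ℕ} (G : SimpleGraph (Fin n)) [DecidableRel G.Adj]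
    (hG : G.Connected) (hm : G.edgeFinset.card = m) (p : ℝ) (hp : 2 < p) :
    pEnergy G p ≤ 2 * m * (2 * (m : ℝ) - n + 1) ^ ((p - 2) / 2) := by
  have hA : (G.adjMatrix ℝ).IsHermitian :=
    (conjTranspose_eq_transpose_of_trivial (G.adjMatrix ℝ)).trans G.isSymm_adjMatrix
  have heig : adjEigenvalues G = hA.eigenvalues := rfl
  have hsq_le (i : Fin n) : adjEigenvalues G i ^ 2 ≤ 2 * (m : ℝ) - n + 1 := by
    simpa [heig, hm] using hG.sq_le_of_hasEigenvalue (hA.hasEigenvalue_eigenvalues i)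
  have hsum_sq : ∑ i, adjEigenvalues G i ^ 2 = 2 * (m : ℝ) := by
    simpa [heig, hm] using (hA.sum_eigenvalues_sq).trans G.trace_adjMatrix_mul_self
  calc pEnergy G p
      ≤ ∑ i, adjEigenvalues G i ^ 2 * (2 * (m : ℝ) - n + 1) ^ ((p - 2) / 2) :=
        sum_le_sum fun i _ => abs_rpow_le_sq_mul_rpow hp.le (hsq_le i)
    _ = 2 * m * (2 * (m : ℝ) - n + 1) ^ ((p - 2) / 2) := by rw [← sum_mul, hsum_sq]
end

section
/- Let G be a connected simple graph on n ≥ 2 vertices and let f(z) be the characteristic polynomial of its adjacency matrix, regarded as a complex polynomial. Then for every real x ≥ 0, |f(ix)| ≥ x^{n−2}·(x² + n − 1), where i = √−1. Equivalently, |f(ix)| ≥ |g(ix)| where g(z) = z^n − (n−1)z^{n−2} is the characteristic polynomial of the star S_n. -/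
open Finset MeasureTheory

/-!
Writing `A` for the adjacency matrix and `λᵢ` for its eigenvalues, `|f(ix)|² = ∏ (x² + λᵢ²)`.
Expanded in powers of `t = x²`, this product is at least `t^(n-2) (t² + e₁ t + e₂)`, where
`e₁ = ∑ λᵢ² = tr A² = 2m` and `2 e₂ = (tr A²)² - tr A⁴`. A connected graph has `m ≥ n - 1`, and
`tr A⁴ ≤ tr A² (tr A² - (n - 1))`, so `e₁ ≥ 2(n - 1)` and `e₂ ≥ (n - 1)²`: these are the values
for the star, whose product is `t^(n-2) (t + n - 1)²`.
-/

open Polynomial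

namespace Matrix.IsHermitian

variable {𝕜 n : Type*} [RCLike 𝕜] [Fintype n] [DecidableEq n]

theorem trace_pow {A : Matrix n n 𝕜} (hA : A.IsHermitian) (k : ℕ) :
    (A ^ k).trace = ∑ i, (hA.eigenvalues i : 𝕜) ^ k := by
  conv_lhs => rw [hA.spectral_theorem, ← map_pow, Unitary.conjStarAlgAut_apply, trace_mul_cycle,
    Unitary.coe_star_mul_self, one_mul, diagonal_pow, trace_diagonal]
  rfl

theorem sq_norm_charpoly_map_eval_I_mul {A : Matrix n n ℝ} (hA : A.IsHermitian) (x : ℝ) :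
    ‖(A.map Complex.ofRealHom).charpoly.eval (Complex.I * x)‖ ^ 2 =
      ∏ i, (x ^ 2 + hA.eigenvalues i ^ 2) := by
  rw [charpoly_map, hA.charpoly_eq, Polynomial.map_prod, eval_prod, norm_prod, ← Finset.prod_pow]
  refine prod_congr rfl fun i _ => ?_
  simp only [Polynomial.map_sub, map_X, map_C, eval_sub, eval_X, eval_C, Real.ringHom_apply,
    Complex.ofRealHom_eq_coe, Complex.sq_norm, Complex.normSq_apply, Complex.sub_re,
    Complex.sub_im, Complex.mul_re, Complex.mul_im, Complex.I_re, Complex.I_im, Complex.ofReal_re,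
    Complex.ofReal_im]
  ring

end Matrix.IsHermitian

namespace Finset

variable {ι K : Type*} [DecidableEq ι] [Field K] [LinearOrder K] [IsStrictOrderedRing K]

theorem pow_card_sub_two_mul_le_prod_add (s : Finset ι) {μ : ι → K} (hμ : ∀ i ∈ s, 0 ≤ μ i)
    {t : K} (ht : 0 ≤ t) (hs : 2 ≤ #s) :
    t ^ (#s - 2) * (t ^ 2 + t * ∑ i ∈ s, μ i + ((∑ i ∈ s, μ i) ^ 2 - ∑ i ∈ s, μ i ^ 2) / 2) ≤
      ∏ i ∈ s, (t + μ i) := by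
  induction s using Finset.induction_on with
  | empty => simp at hs
  | insert a s ha ih =>
    have hμa : 0 ≤ μ a := hμ a (mem_insert_self a s)
    have hμs : ∀ i ∈ s, 0 ≤ μ i := fun i hi => hμ i (mem_insert_of_mem hi)
    rw [card_insert_of_notMem ha] at hs ⊢
    rw [sum_insert ha, sum_insert ha, prod_insert ha]
    obtain hs₁ | hs₂ : #s = 1 ∨ 2 ≤ #s := by omega
    · obtain ⟨b, rfl⟩ := card_eq_one.mp hs₁
      simp only [card_singleton, sum_singleton, prod_singleton]
      exact le_of_eq (by norm_num; ring)
    · set E := ∑ i ∈ s, μ i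
      set Q := ∑ i ∈ s, μ i ^ 2
      have hQE : 0 ≤ (E ^ 2 - Q) / 2 := by
        have := sum_sq_le_sq_sum_of_nonneg hμs
        linarith
      have hE : 0 ≤ E := sum_nonneg hμs
      rw [show #s + 1 - 2 = #s - 2 + 1 by omega, pow_succ]
      calc t ^ (#s - 2) * t * (t ^ 2 + t * (μ a + E) + ((μ a + E) ^ 2 - (μ a ^ 2 + Q)) / 2)
          = (t + μ a) * (t ^ (#s - 2) * (t ^ 2 + t * E + (E ^ 2 - Q) / 2))
            - μ a * t ^ (#s - 2) * ((E ^ 2 - Q) / 2) := by ring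
        _ ≤ (t + μ a) * (t ^ (#s - 2) * (t ^ 2 + t * E + (E ^ 2 - Q) / 2)) :=
          sub_le_self _ (by positivity)
        _ ≤ (t + μ a) * ∏ i ∈ s, (t + μ i) := by gcongr; exact ih hμs hs₂

theorem pow_card_sub_two_mul_sq_le_prod_add (s : Finset ι) {μ : ι → K} (hμ : ∀ i ∈ s, 0 ≤ μ i)
    {t : K} (ht : 0 ≤ t) (hs : 2 ≤ #s) {c : K} (hc : 0 ≤ c) (h₁ : 2 * c ≤ ∑ i ∈ s, μ i)
    (h₂ : ∑ i ∈ s, μ i ^ 2 ≤ (∑ i ∈ s, μ i) * (∑ i ∈ s, μ i - c)) :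
    t ^ (#s - 2) * (t + c) ^ 2 ≤ ∏ i ∈ s, (t + μ i) := by
  refine le_trans ?_ (s.pow_card_sub_two_mul_le_prod_add hμ ht hs)
  gcongr
  nlinarith

end Finset

namespace SimpleGraph

variable {V α : Type*} (G : SimpleGraph V) [DecidableRel G.Adj]

theorem adjMatrix_map [NonAssocSemiring α] {β : Type*} [NonAssocSemiring β] (f : α →+* β) :
    (G.adjMatrix α).map f = G.adjMatrix β := by
  ext v w
  simp [adjMatrix_apply, apply_ite f]

section Order

variable [Zero α] [One α] [PartialOrder α] [ZeroLEOneClass α]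

theorem adjMatrix_apply_nonneg (v w : V) : 0 ≤ G.adjMatrix α v w := by
  rw [adjMatrix_apply]
  split_ifs <;> simp

theorem adjMatrix_apply_le_one (v w : V) : G.adjMatrix α v w ≤ 1 := by
  rw [adjMatrix_apply]
  split_ifs <;> simp

end Order

variable [Fintype V]

/-- Outside the neighbourhood of `u` lie `u` itself and `n - 1 - deg u` vertices of degree `≥ 1`. -/
theorem sum_degree_neighborFinset_add_le (hdeg : ∀ v, 0 < G.degree v) (u : V) :
    ∑ w ∈ G.neighborFinset u, G.degree w + (Fintype.card V - 1) ≤ 2 * #G.edgeFinset := by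
  classical
  have hu : u ∈ (G.neighborFinset u)ᶜ := by simp
  have hcard : #((G.neighborFinset u)ᶜ.erase u) + G.degree u + 1 = Fintype.card V := by
    rw [card_erase_of_mem hu, card_compl, card_neighborFinset_eq_degree]
    have := G.degree_lt_card_verts u
    omega
  have hrest : #((G.neighborFinset u)ᶜ.erase u) ≤
      ∑ w ∈ (G.neighborFinset u)ᶜ.erase u, G.degree w := by
    simpa only [smul_eq_mul, mul_one] using card_nsmul_le_sum _ (G.degree ·) 1 fun w _ => hdeg w
  rw [← sum_degrees_eq_twice_card_edges, ← sum_add_sum_compl (G.neighborFinset u),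
    ← add_sum_erase _ _ hu]
  omega

theorem sum_degree_mul_sum_degree_neighborFinset_add_le (hdeg : ∀ v, 0 < G.degree v) :
    ∑ u, G.degree u * ∑ w ∈ G.neighborFinset u, G.degree w +
      2 * #G.edgeFinset * (Fintype.card V - 1) ≤ (2 * #G.edgeFinset) ^ 2 := by
  calc _ = ∑ u, G.degree u * (∑ w ∈ G.neighborFinset u, G.degree w + (Fintype.card V - 1)) := by
        simp_rw [mul_add, sum_add_distrib, ← sum_mul, sum_degrees_eq_twice_card_edges]
    _ ≤ ∑ u, G.degree u * (2 * #G.edgeFinset) := by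
        gcongr with u
        exact G.sum_degree_neighborFinset_add_le hdeg u
    _ = _ := by rw [← sum_mul, sum_degrees_eq_twice_card_edges, sq]

variable [DecidableEq V]

theorem trace_adjMatrix_sq [Semiring α] : ((G.adjMatrix α) ^ 2).trace = 2 * #G.edgeFinset := by
  simp only [sq, Matrix.trace, Matrix.diag_apply, adjMatrix_mul_self_apply_self]
  rw [← Nat.cast_sum, sum_degrees_eq_twice_card_edges, Nat.cast_mul, Nat.cast_ofNat]

/-- `(A²)ᵥᵤ ≤ deg u` and `∑ᵥ (A²)ᵤᵥ = ∑_{w ~ u} deg w`, so `tr A⁴ = ∑ᵤ ∑ᵥ (A²)ᵤᵥ (A²)ᵥᵤ`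
is bounded by the number of walks of length `3`. -/
theorem trace_adjMatrix_pow_four_le [CommSemiring α] [PartialOrder α] [IsOrderedRing α] :
    ((G.adjMatrix α) ^ 4).trace ≤
      ∑ u, (G.degree u : α) * ∑ w ∈ G.neighborFinset u, (G.degree w : α) := by
  set A := G.adjMatrix α
  have hle : ∀ u v, (A * A) v u ≤ G.degree u := by
    intro u v
    rw [mul_adjMatrix_apply, ← card_neighborFinset_eq_degree, card_eq_sum_ones, Nat.cast_sum,
      Nat.cast_one]
    exact sum_le_sum fun w _ => G.adjMatrix_apply_le_one v w
  have hrow : ∀ u, ∑ v, (A * A) u v = ∑ w ∈ G.neighborFinset u, (G.degree w : α) := by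
    intro u
    simp only [A, adjMatrix_mul_apply]
    rw [sum_comm]
    refine sum_congr rfl fun w _ => ?_
    simp [← card_neighborFinset_eq_degree, neighborFinset_eq_filter]
  calc (A ^ 4).trace = ∑ u, ∑ v, (A * A) u v * (A * A) v u := by
        rw [show A ^ 4 = (A * A) * (A * A) by noncomm_ring]
        rfl
    _ ≤ ∑ u, ∑ v, (A * A) u v * G.degree u := by
        gcongr with u _ v _
        · exact sum_nonneg fun w _ => mul_nonneg (G.adjMatrix_apply_nonneg u w)
            (G.adjMatrix_apply_nonneg w v)
        · exact hle u v
    _ = _ := by simp_rw [← sum_mul, hrow, mul_comm]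

end SimpleGraph

namespace SimpleGraph.Connected

variable {V α : Type*} [Fintype V] [DecidableEq V] {G : SimpleGraph V} [DecidableRel G.Adj]
  [CommRing α] [LinearOrder α] [IsStrictOrderedRing α]

theorem two_mul_card_sub_one_le_trace_adjMatrix_sq (hG : G.Connected) :
    2 * ((Fintype.card V : α) - 1) ≤ ((G.adjMatrix α) ^ 2).trace := by
  have h := hG.card_vert_le_card_edgeSet_add_one
  rw [Nat.card_eq_fintype_card, Nat.card_eq_fintype_card, ← edgeFinset_card] at h
  have h' : (Fintype.card V : α) ≤ #G.edgeFinset + 1 := by exact_mod_cast h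
  rw [G.trace_adjMatrix_sq]
  linarith

theorem trace_adjMatrix_pow_four_le_trace_sq_mul [Nontrivial V] (hG : G.Connected) :
    ((G.adjMatrix α) ^ 4).trace ≤
      ((G.adjMatrix α) ^ 2).trace * (((G.adjMatrix α) ^ 2).trace - (Fintype.card V - 1)) := by
  have h := G.sum_degree_mul_sum_degree_neighborFinset_add_le
    fun v => hG.preconnected.degree_pos_of_nontrivial v
  have hV : 1 ≤ Fintype.card V := Fintype.card_pos
  refine G.trace_adjMatrix_pow_four_le.trans ?_
  rw [G.trace_adjMatrix_sq, mul_sub, le_sub_iff_add_le]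
  have := (Nat.cast_le (α := α)).mpr h
  push_cast [hV] at this
  linear_combination this

end SimpleGraph.Connected

theorem abs_charpoly_eval_I_ge_general {n : ℕ} (hn : 2 ≤ n) (G : SimpleGraph (Fin n))
    [DecidableRel G.Adj] (hG : G.Connected) (x : ℝ) :
    x ^ (n - 2) * (x ^ 2 + (n : ℝ) - 1) ≤
      ‖(G.adjMatrix ℂ).charpoly.eval (Complex.I * x)‖ := by
  have : Nontrivial (Fin n) := Fin.nontrivial_iff_two_le.mpr hn
  have hn' : (2 : ℝ) ≤ n := by exact_mod_cast hn
  have hA : (G.adjMatrix ℝ).IsHermitian := G.isSymm_adjMatrix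
  have hnorm := hA.sq_norm_charpoly_map_eval_I_mul x
  rw [G.adjMatrix_map] at hnorm
  have htr₂ := hA.trace_pow 2
  have htr₄ := hA.trace_pow 4
  simp only [RCLike.ofReal_real_eq_id, id] at htr₂ htr₄
  refine le_of_pow_le_pow_left₀ two_ne_zero (norm_nonneg _) ?_
  rw [hnorm]
  calc (x ^ (n - 2) * (x ^ 2 + n - 1)) ^ 2
      = (x ^ 2) ^ (#(univ : Finset (Fin n)) - 2) * (x ^ 2 + (n - 1)) ^ 2 := by
        rw [card_univ, Fintype.card_fin]
        ring
    _ ≤ ∏ i, (x ^ 2 + hA.eigenvalues i ^ 2) := by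
        refine pow_card_sub_two_mul_sq_le_prod_add _ (fun i _ => sq_nonneg _) (sq_nonneg x)
          (by simpa using hn) (by linarith) ?_ ?_
        · simpa [← htr₂] using hG.two_mul_card_sub_one_le_trace_adjMatrix_sq
        · simp_rw [← pow_mul, ← htr₂, ← htr₄]
          simpa using hG.trace_adjMatrix_pow_four_le_trace_sq_mul

/-- For a connected graph `G` on `n ≥ 2` vertices with characteristic polynomial `f`,
`|f(ix)| ≥ x^(n-2) (x² + n - 1)` for all real `x ≥ 0`. -/
theorem abs_charpoly_eval_I_ge {n : ℕ} (hn : 2 ≤ n) (G : SimpleGraph (Fin n))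
    [DecidableRel G.Adj] (hG : G.Connected) (x : ℝ) (hx : 0 ≤ x) :
    x ^ (n - 2) * (x ^ 2 + (n : ℝ) - 1) ≤
      ‖(G.adjMatrix ℂ).charpoly.eval (Complex.I * x)‖ :=
  abs_charpoly_eval_I_ge_general hn G hG x
end
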